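/- arXiv:2304.14744 — 2 statements merged into one kernel-verified Lean document; each statement's English description precedes it below -/
import Mathlib

section
/- There exists a constant C > 0 (depending only on N) such that for all z₁, z₂ ∈ ℂ: (i) |F(z₁+z₂) − F(z₁) − Re(conj(f(z₁))·z₂)| ≤ C·(|z₁|^{8/(N−4)}·|z₂|² + |z₂|^{2N/(N−4)}); and (ii) |F(z₁+z₂) − F(z₁) − Re(conj(f(z₁))·z₂) − (1/2)·Re(conj(f'(z₁)z₂)·z₂)| ≤ C·|z₂|^{2N/(N−4)}. -/
open MeasureTheory

noncomputable section

abbrev Rn (N : ℕ) : Type := EuclideanSpace ℝ (Fin N)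

noncomputable def lapR {N : ℕ} (u : Rn N → ℝ) (x : Rn N) : ℝ :=
  ∑ i : Fin N, iteratedFDeriv ℝ 2 u x (fun _ => EuclideanSpace.single i 1)

noncomputable def lapC {N : ℕ} (u : Rn N → ℂ) (x : Rn N) : ℂ :=
  ∑ i : Fin N, iteratedFDeriv ℝ 2 u x (fun _ => EuclideanSpace.single i 1)

noncomputable def Wfun (N : ℕ) (x : Rn N) : ℝ :=
  ((N : ℝ) * ((N : ℝ) - 4) * ((N : ℝ) ^ 2 - 4)) ^ (((N : ℝ) - 4) / 8) *
    (1 + ‖x‖ ^ 2) ^ (-(((N : ℝ) - 4) / 2))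

noncomputable def LamR {N : ℕ} (v : Rn N → ℝ) (x : Rn N) : ℝ :=
  (((N : ℝ) - 4) / 2) * v x + fderiv ℝ v x x

noncomputable def LamC {N : ℕ} (v : Rn N → ℂ) (x : Rn N) : ℂ :=
  ((((N : ℝ) - 4) / 2) : ℝ) * v x + fderiv ℝ v x x

noncomputable def rescR {N : ℕ} (lam : ℝ) (u : Rn N → ℝ) (x : Rn N) : ℝ :=
  lam ^ (-(((N : ℝ) - 4) / 2)) * u (lam⁻¹ • x)

noncomputable def fNL (N : ℕ) (z : ℂ) : ℂ :=
  Complex.ofReal (‖z‖ ^ ((8 : ℝ) / ((N : ℝ) - 4))) * z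

noncomputable def fNL' (N : ℕ) (z w : ℂ) : ℂ :=
  if z = 0 then 0 else
    Complex.ofReal (‖z‖ ^ ((8 : ℝ) / ((N : ℝ) - 4))) *
      (w + Complex.ofReal (((8 : ℝ) / ((N : ℝ) - 4)) * ((((starRingEnd ℂ) z) * w).re / ‖z‖ ^ 2)) * z)

noncomputable def FNL (N : ℕ) (z : ℂ) : ℝ :=
  (((N : ℝ) - 4) / (2 * (N : ℝ))) * ‖z‖ ^ ((2 * (N : ℝ)) / ((N : ℝ) - 4))

noncomputable def cexp (θ : ℝ) : ℂ := Complex.exp (Complex.I * θ)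

noncomputable def pairC {N : ℕ} (v w : Rn N → ℂ) : ℝ :=
  ∫ x : Rn N, ((starRingEnd ℂ) (v x) * w x).re

noncomputable def energyC {N : ℕ} (u : Rn N → ℂ) : ℝ :=
  (1 / 2) * (∫ x : Rn N, ‖lapC u x‖ ^ 2) - (∫ x : Rn N, FNL N (u x))

noncomputable def enorm2 {N : ℕ} (g : Rn N → ℂ) : ℝ := ∫ x : Rn N, ‖lapC g x‖ ^ 2

/-! Write `α = 8/(N-4) ∈ (0, 1]`. Then `f x = ‖x‖^α x` is the gradient of
`F x = ‖x‖^(α+2)/(α+2)`, and `f' x = ‖x‖^α (id + α Pₓ)`, with `Pₓ` the orthogonal projection onto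
`ℝ x`, is `α`-Hölder: `‖x‖^α` is, and `‖y‖^α ‖x/‖x‖ - y/‖y‖‖ ≤ 2 ‖x - y‖^α`. The mean value
inequality then gives `‖f (x + w) - f x - f' x w‖ ≤ 6 ‖w‖^(α+1)`, and differentiating
`t ↦ F (x + t w)` turns this into the second-order expansion of `F` with error `6 ‖w‖^(α+2)`. The
first-order bound follows from it and `‖f' x‖ ≤ (1 + α) ‖x‖^α`. -/

open NormedSpace InnerProductSpace Set Asymptotics Topology
open scoped RealInnerProductSpace

theorem Real.abs_rpow_sub_rpow_le {a b α : ℝ} (ha : 0 ≤ a) (hb : 0 ≤ b) (h0 : 0 ≤ α)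
    (h1 : α ≤ 1) : |a ^ α - b ^ α| ≤ |a - b| ^ α := by
  have key : ∀ {s t : ℝ}, 0 ≤ s → 0 ≤ t → s ^ α ≤ t ^ α + |s - t| ^ α := fun {s t} hs ht =>
    calc s ^ α ≤ (t + |s - t|) ^ α := rpow_le_rpow hs (by linarith [le_abs_self (s - t)]) h0
      _ ≤ t ^ α + |s - t| ^ α := rpow_add_le_add_rpow ht (abs_nonneg _) h0 h1
  have hab := key ha hb
  have hba := key hb ha
  rw [abs_sub_comm] at hba
  rw [abs_sub_le_iff]
  constructor <;> linarith

section Normalize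

variable {E : Type*} [NormedAddCommGroup E] [NormedSpace ℝ E]

theorem norm_normalize_le_one (x : E) : ‖normalize x‖ ≤ 1 := by
  rcases eq_or_ne x 0 with rfl | hx
  · simp [normalize_zero_eq_zero]
  · exact (norm_normalize_eq_one_iff.2 hx).le

theorem norm_normalize_sub_normalize_le (x : E) {y : E} (hy : y ≠ 0) :
    ‖normalize x - normalize y‖ ≤ 2 * ‖x - y‖ / ‖y‖ := by
  have hy' : 0 < ‖y‖ := norm_pos_iff.2 hy
  have hdecomp : normalize x - normalize y
      = ‖y‖⁻¹ • ((‖y‖ - ‖x‖) • normalize x + (x - y)) := by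
    have hx := norm_smul_normalize x
    set n := normalize x
    rw [show normalize y = ‖y‖⁻¹ • y from rfl, smul_add, smul_smul, mul_sub,
      inv_mul_cancel₀ hy'.ne', sub_smul, one_smul, ← smul_smul, hx]
    module
  have hbound : ‖(‖y‖ - ‖x‖) • normalize x + (x - y)‖ ≤ 2 * ‖x - y‖ :=
    calc _ ≤ |‖y‖ - ‖x‖| * ‖normalize x‖ + ‖x - y‖ := by
            rw [← Real.norm_eq_abs, ← norm_smul]; exact norm_add_le _ _
      _ ≤ ‖x - y‖ * 1 + ‖x - y‖ := by
            gcongr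
            · rw [norm_sub_rev]; exact abs_norm_sub_norm_le y x
            · exact norm_normalize_le_one x
      _ = 2 * ‖x - y‖ := by ring
  rw [hdecomp, norm_smul, norm_inv, norm_norm, inv_mul_eq_div]
  gcongr

theorem rpow_norm_mul_norm_normalize_sub_le {α : ℝ} (h0 : 0 < α) (h1 : α ≤ 1) (x y : E) :
    ‖y‖ ^ α * ‖normalize x - normalize y‖ ≤ 2 * ‖x - y‖ ^ α := by
  rcases eq_or_ne y 0 with rfl | hy
  · simp only [norm_zero, Real.zero_rpow h0.ne', zero_mul]; positivity
  rcases eq_or_ne x y with rfl | hxy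
  · simp [Real.zero_rpow h0.ne']
  have hb : 0 < ‖y‖ := norm_pos_iff.2 hy
  have hd : 0 < ‖x - y‖ := norm_pos_iff.2 (sub_ne_zero.2 hxy)
  rcases le_total ‖y‖ ‖x - y‖ with hbd | hdb
  · have hdiff : ‖normalize x - normalize y‖ ≤ 2 := by
      linarith [norm_sub_le (normalize x) (normalize y), norm_normalize_le_one x,
        norm_normalize_le_one y]
    calc _ ≤ ‖x - y‖ ^ α * 2 := by gcongr
      _ = _ := mul_comm _ _
  · calc _ ≤ ‖y‖ ^ α * (2 * ‖x - y‖ / ‖y‖) := by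
            gcongr; exact norm_normalize_sub_normalize_le x hy
      _ = 2 * (‖y‖ ^ (α - 1) * ‖x - y‖) := by
            rw [Real.rpow_sub_one hb.ne']; field_simp
      _ ≤ 2 * (‖x - y‖ ^ (α - 1) * ‖x - y‖) := by
            gcongr 2 * (?_ * _)
            exact Real.rpow_le_rpow_of_nonpos hd hdb (by linarith)
      _ = 2 * ‖x - y‖ ^ α := by
            rw [Real.rpow_sub_one hd.ne']; field_simp

end Normalize

theorem norm_rankOne_self_sub_rankOne_self_le {𝕜 F : Type*} [RCLike 𝕜] [NormedAddCommGroup F]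
    [InnerProductSpace 𝕜 F] {u v : F} (hu : ‖u‖ ≤ 1) (hv : ‖v‖ ≤ 1) :
    ‖rankOne 𝕜 u u - rankOne 𝕜 v v‖ ≤ 2 * ‖u - v‖ := by
  have hsplit : rankOne 𝕜 u u - rankOne 𝕜 v v = rankOne 𝕜 (u - v) u + rankOne 𝕜 v (u - v) := by
    simp only [map_sub, sub_apply]
    abel
  calc _ ≤ ‖u - v‖ * ‖u‖ + ‖v‖ * ‖u - v‖ := by
          rw [hsplit, ← norm_rankOne (𝕜 := 𝕜) (u - v), ← norm_rankOne (𝕜 := 𝕜) v]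
          exact norm_add_le _ _
    _ ≤ ‖u - v‖ * 1 + 1 * ‖u - v‖ := by gcongr
    _ = 2 * ‖u - v‖ := by ring

section NormRpowSMul

variable {E : Type*} [NormedAddCommGroup E] [InnerProductSpace ℝ E] {α : ℝ}

noncomputable def normRpowSMul (α : ℝ) (x : E) : E := ‖x‖ ^ α • x

noncomputable def normRpowSMulDeriv (α : ℝ) (x : E) : E →L[ℝ] E :=
  ‖x‖ ^ α • (ContinuousLinearMap.id ℝ E + α • rankOne ℝ (normalize x) (normalize x))

theorem normRpowSMulDeriv_apply (x w : E) :
    normRpowSMulDeriv α x w = ‖x‖ ^ α • (w + (α * (⟪x, w⟫ / ‖x‖ ^ 2)) • x) := by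
  simp only [normRpowSMulDeriv, NormedSpace.normalize, map_smul, smul_apply, smul_smul,
    smul_add, add_apply, ContinuousLinearMap.id_apply, rankOne_apply, add_right_inj]
  congr 1
  ring

theorem norm_id_add_smul_rankOne_normalize_le (h0 : 0 ≤ α) (x : E) :
    ‖ContinuousLinearMap.id ℝ E + α • rankOne ℝ (normalize x) (normalize x)‖ ≤ 1 + α := by
  have hP : ‖rankOne ℝ (normalize x) (normalize x)‖ ≤ 1 := by
    rw [norm_rankOne]
    exact mul_le_one₀ (norm_normalize_le_one x) (norm_nonneg _) (norm_normalize_le_one x)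
  calc _ ≤ ‖ContinuousLinearMap.id ℝ E‖ + ‖α • rankOne ℝ (normalize x) (normalize x)‖ :=
        norm_add_le _ _
    _ ≤ 1 + α * 1 := by
        rw [norm_smul, Real.norm_of_nonneg h0]
        gcongr
        exact ContinuousLinearMap.norm_id_le
    _ = 1 + α := by ring

theorem norm_normRpowSMulDeriv_le (h0 : 0 ≤ α) (x : E) :
    ‖normRpowSMulDeriv α x‖ ≤ (1 + α) * ‖x‖ ^ α := by
  rw [normRpowSMulDeriv, norm_smul, Real.norm_of_nonneg (by positivity), mul_comm]
  gcongr
  exact norm_id_add_smul_rankOne_normalize_le h0 x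

theorem norm_normRpowSMulDeriv_sub_le (h0 : 0 < α) (h1 : α ≤ 1) (x y : E) :
    ‖normRpowSMulDeriv α x - normRpowSMulDeriv α y‖ ≤ 6 * ‖x - y‖ ^ α := by
  set T := ContinuousLinearMap.id ℝ E + α • rankOne ℝ (normalize x) (normalize x)
  set Px := rankOne ℝ (normalize x) (normalize x)
  set Py := rankOne ℝ (normalize y) (normalize y)
  have hsplit : normRpowSMulDeriv α x - normRpowSMulDeriv α y
      = (‖x‖ ^ α - ‖y‖ ^ α) • T + (α * ‖y‖ ^ α) • (Px - Py) := by
    simp only [normRpowSMulDeriv, T, Px, Py]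
    module
  have hpow : |‖x‖ ^ α - ‖y‖ ^ α| ≤ ‖x - y‖ ^ α :=
    (Real.abs_rpow_sub_rpow_le (norm_nonneg x) (norm_nonneg y) h0.le h1).trans
      (Real.rpow_le_rpow (abs_nonneg _) (abs_norm_sub_norm_le x y) h0.le)
  have hP : ‖y‖ ^ α * ‖Px - Py‖ ≤ 4 * ‖x - y‖ ^ α :=
    calc _ ≤ ‖y‖ ^ α * (2 * ‖normalize x - normalize y‖) := by
          gcongr
          exact norm_rankOne_self_sub_rankOne_self_le (norm_normalize_le_one x)
            (norm_normalize_le_one y)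
      _ = 2 * (‖y‖ ^ α * ‖normalize x - normalize y‖) := by ring
      _ ≤ 2 * (2 * ‖x - y‖ ^ α) := by
          gcongr 2 * ?_; exact rpow_norm_mul_norm_normalize_sub_le h0 h1 x y
      _ = 4 * ‖x - y‖ ^ α := by ring
  have hT := norm_id_add_smul_rankOne_normalize_le h0.le x
  have hd : 0 ≤ ‖x - y‖ ^ α := by positivity
  rw [hsplit]
  calc _ ≤ |‖x‖ ^ α - ‖y‖ ^ α| * ‖T‖ + α * (‖y‖ ^ α * ‖Px - Py‖) := by
        refine (norm_add_le _ _).trans_eq ?_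
        rw [norm_smul, norm_smul, Real.norm_eq_abs, Real.norm_of_nonneg (by positivity), mul_assoc]
    _ ≤ ‖x - y‖ ^ α * (1 + α) + α * (4 * ‖x - y‖ ^ α) := by gcongr
    _ ≤ 6 * ‖x - y‖ ^ α := by nlinarith

theorem hasFDerivAt_normRpowSMul (h0 : 0 < α) (x : E) :
    HasFDerivAt (normRpowSMul α) (normRpowSMulDeriv α x) x := by
  rcases eq_or_ne x 0 with rfl | hx
  · have hD : normRpowSMulDeriv α (0 : E) = 0 := by
      simp [normRpowSMulDeriv, Real.zero_rpow h0.ne']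
    rw [hD, hasFDerivAt_iff_isLittleO_nhds_zero]
    have hlim : (fun h : E => ‖h‖ ^ α) =o[𝓝 0] (fun _ => (1 : ℝ)) := by
      refine (isLittleO_one_iff ℝ).2 ?_
      simpa [Real.zero_rpow h0.ne'] using
        (continuous_norm.rpow_const fun _ => Or.inr h0.le).tendsto (0 : E)
    simpa [normRpowSMul] using hlim.smul_isBigO (isBigO_refl (fun h : E => h) (𝓝 0))
  · have hnorm : HasFDerivAt (fun y : E => ‖y‖ ^ α)
        ((α * ‖x‖ ^ (α - 2)) • innerSL ℝ x) x := by
      have h := (hasStrictFDerivAt_norm_sq x).hasFDerivAt.rpow_const (p := α / 2)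
        (Or.inl (by positivity))
      have hsq : ∀ (y : E) (p : ℝ), (‖y‖ ^ 2) ^ (p / 2) = ‖y‖ ^ p := fun y p => by
        rw [← Real.rpow_natCast, ← Real.rpow_mul (norm_nonneg _)]; ring_nf
      convert h using 1
      · simp only [hsq]
      · rw [show α / 2 - 1 = (α - 2) / 2 by ring, hsq, ← Nat.cast_smul_eq_nsmul ℝ, smul_smul]
        congr 1
        ring
    have hxpos : 0 < ‖x‖ := norm_pos_iff.2 hx
    have hD : normRpowSMulDeriv α x = ‖x‖ ^ α • ContinuousLinearMap.id ℝ E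
        + ((α * ‖x‖ ^ (α - 2)) • innerSL ℝ x).smulRight x := by
      ext w
      simp only [normRpowSMulDeriv_apply, smul_add, smul_smul, Real.rpow_sub hxpos,
        Real.rpow_ofNat, add_apply, smul_apply, ContinuousLinearMap.id_apply,
        ContinuousLinearMap.smulRight_apply, coe_innerSL_apply, smul_eq_mul, add_right_inj]
      ring_nf
    rw [hD]
    exact hnorm.smul (hasFDerivAt_id x)

theorem norm_normRpowSMul_add_sub_sub_le (h0 : 0 < α) (h1 : α ≤ 1) (x w : E) :
    ‖normRpowSMul α (x + w) - normRpowSMul α x - normRpowSMulDeriv α x w‖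
      ≤ 6 * ‖w‖ ^ α * ‖w‖ := by
  set g : E → E := fun y => normRpowSMul α y - normRpowSMulDeriv α x y
  have hg : ∀ y ∈ Metric.closedBall x ‖w‖,
      HasFDerivWithinAt g (normRpowSMulDeriv α y - normRpowSMulDeriv α x)
        (Metric.closedBall x ‖w‖) y := fun y _ =>
    ((hasFDerivAt_normRpowSMul h0 y).sub (normRpowSMulDeriv α x).hasFDerivAt).hasFDerivWithinAt
  have hbound : ∀ y ∈ Metric.closedBall x ‖w‖,
      ‖normRpowSMulDeriv α y - normRpowSMulDeriv α x‖ ≤ 6 * ‖w‖ ^ α := fun y hy => by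
    refine (norm_normRpowSMulDeriv_sub_le h0 h1 y x).trans ?_
    gcongr
    rwa [Metric.mem_closedBall, dist_eq_norm] at hy
  have h := (convex_closedBall x ‖w‖).norm_image_sub_le_of_norm_hasFDerivWithin_le hg hbound
    (Metric.mem_closedBall_self (norm_nonneg w))
    (show x + w ∈ Metric.closedBall x ‖w‖ by simp [Metric.mem_closedBall, dist_eq_norm])
  have hgw : g (x + w) - g x
      = normRpowSMul α (x + w) - normRpowSMul α x - normRpowSMulDeriv α x w := by
    simp only [g, map_add]; abel
  rwa [hgw, add_sub_cancel_left] at h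

theorem hasFDerivAt_norm_rpow_add_two_div (hα : -1 < α) (x : E) :
    HasFDerivAt (fun y : E => ‖y‖ ^ (α + 2) / (α + 2)) (innerSL ℝ (normRpowSMul α x)) x := by
  have h := (hasFDerivAt_norm_rpow x (p := α + 2) (by linarith)).mul_const (α + 2)⁻¹
  simp only [← div_eq_mul_inv] at h
  rwa [smul_smul, ← mul_assoc, inv_mul_cancel₀ (by linarith), one_mul, add_sub_cancel_right,
    ← map_smul] at h

theorem abs_norm_rpow_taylor_two_le (h0 : 0 < α) (h1 : α ≤ 1) (x w : E) :
    |‖x + w‖ ^ (α + 2) / (α + 2) - ‖x‖ ^ (α + 2) / (α + 2) - ⟪normRpowSMul α x, w⟫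
        - (1 / 2) * ⟪normRpowSMulDeriv α x w, w⟫| ≤ 6 * ‖w‖ ^ (α + 2) := by
  set a := ⟪normRpowSMul α x, w⟫
  set b := ⟪normRpowSMulDeriv α x w, w⟫
  set φ : ℝ → ℝ := fun t => ‖x + t • w‖ ^ (α + 2) / (α + 2) - t * a - t ^ 2 / 2 * b
  set φ' : ℝ → ℝ := fun t =>
    ⟪normRpowSMul α (x + t • w) - normRpowSMul α x - normRpowSMulDeriv α x (t • w), w⟫
  have hφ : ∀ t, HasDerivAt φ (φ' t) t := fun t => by
    have hline : HasDerivAt (fun s : ℝ => x + s • w) w t := by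
      simpa using ((hasDerivAt_id t).smul_const w).const_add x
    have h := (((hasFDerivAt_norm_rpow_add_two_div (by linarith) (x + t • w)).comp_hasDerivAt t
      hline).sub ((hasDerivAt_id t).mul_const a)).sub
        (((hasDerivAt_pow 2 t).div_const 2).mul_const b)
    refine h.congr_deriv ?_
    simp [φ', a, b, inner_sub_left, inner_smul_left]
  have hφ' : ∀ t ∈ Ico (0 : ℝ) 1, ‖φ' t‖ ≤ 6 * ‖w‖ ^ (α + 2) := fun t ht => by
    have htw : ‖t • w‖ ≤ ‖w‖ := by
      rw [norm_smul, Real.norm_of_nonneg ht.1]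
      exact mul_le_of_le_one_left (norm_nonneg _) ht.2.le
    calc ‖φ' t‖
        ≤ ‖normRpowSMul α (x + t • w) - normRpowSMul α x - normRpowSMulDeriv α x (t • w)‖ * ‖w‖ :=
          abs_real_inner_le_norm _ _
      _ ≤ 6 * ‖t • w‖ ^ α * ‖t • w‖ * ‖w‖ := by
          gcongr; exact norm_normRpowSMul_add_sub_sub_le h0 h1 x (t • w)
      _ ≤ 6 * ‖w‖ ^ α * ‖w‖ * ‖w‖ := by gcongr
      _ = 6 * ‖w‖ ^ (α + 2) := by
          rw [Real.rpow_add' (norm_nonneg _) (by linarith), Real.rpow_two]; ring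
  have h := norm_image_sub_le_of_norm_deriv_le_segment_01' (fun t _ => (hφ t).hasDerivWithinAt) hφ'
  have hφ10 : φ 1 - φ 0 = ‖x + w‖ ^ (α + 2) / (α + 2) - ‖x‖ ^ (α + 2) / (α + 2) - a
      - (1 / 2) * b := by
    simp only [φ, one_smul, zero_smul, add_zero]
    ring
  rwa [hφ10, Real.norm_eq_abs] at h

theorem abs_norm_rpow_taylor_one_le (h0 : 0 < α) (h1 : α ≤ 1) (x w : E) :
    |‖x + w‖ ^ (α + 2) / (α + 2) - ‖x‖ ^ (α + 2) / (α + 2) - ⟪normRpowSMul α x, w⟫|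
      ≤ 6 * (‖x‖ ^ α * ‖w‖ ^ 2 + ‖w‖ ^ (α + 2)) := by
  have h2 := abs_norm_rpow_taylor_two_le h0 h1 x w
  have hD : |(1 / 2) * ⟪normRpowSMulDeriv α x w, w⟫| ≤ ‖x‖ ^ α * ‖w‖ ^ 2 :=
    calc _ ≤ (1 / 2) * (‖normRpowSMulDeriv α x‖ * ‖w‖ * ‖w‖) := by
          rw [abs_mul, abs_of_pos (by norm_num : (0 : ℝ) < 1 / 2)]
          gcongr
          exact (abs_real_inner_le_norm _ _).trans
            (mul_le_mul_of_nonneg_right ((normRpowSMulDeriv α x).le_opNorm w) (norm_nonneg w))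
      _ ≤ (1 / 2) * ((1 + α) * ‖x‖ ^ α * ‖w‖ * ‖w‖) := by
          gcongr; exact norm_normRpowSMulDeriv_le h0.le x
      _ ≤ ‖x‖ ^ α * ‖w‖ ^ 2 := by
          have : 0 ≤ ‖x‖ ^ α * ‖w‖ ^ 2 := by positivity
          nlinarith
  have hpos : 0 ≤ ‖x‖ ^ α * ‖w‖ ^ 2 := by positivity
  calc _ ≤ 6 * ‖w‖ ^ (α + 2) + ‖x‖ ^ α * ‖w‖ ^ 2 := by
        have := abs_add_le (‖x + w‖ ^ (α + 2) / (α + 2) - ‖x‖ ^ (α + 2) / (α + 2)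
          - ⟪normRpowSMul α x, w⟫ - (1 / 2) * ⟪normRpowSMulDeriv α x w, w⟫)
          ((1 / 2) * ⟪normRpowSMulDeriv α x w, w⟫)
        rw [sub_add_cancel] at this
        linarith
    _ ≤ _ := by nlinarith

end NormRpowSMul

theorem Complex.re_conj_mul_eq_inner (a b : ℂ) : ((starRingEnd ℂ) a * b).re = ⟪a, b⟫_ℝ := by
  rw [Complex.inner, mul_comm]

theorem fNL_eq_normRpowSMul (N : ℕ) : fNL N = normRpowSMul (8 / ((N : ℝ) - 4)) := by
  funext z
  simp [fNL, normRpowSMul, Complex.real_smul]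

theorem FNL_eq_norm_rpow_div {N : ℕ} (hN : 4 < N) (z : ℂ) :
    FNL N z = ‖z‖ ^ (8 / ((N : ℝ) - 4) + 2) / (8 / ((N : ℝ) - 4) + 2) := by
  have hN' : (0 : ℝ) < N - 4 := by
    have : (4 : ℝ) < N := by exact_mod_cast hN
    linarith
  have hexp : 8 / ((N : ℝ) - 4) + 2 = 2 * N / (N - 4) := by field_simp; ring
  rw [FNL, hexp]
  field_simp

theorem fNL'_eq_normRpowSMulDeriv {N : ℕ} (hN : 4 < N) (z w : ℂ) :
    fNL' N z w = normRpowSMulDeriv (8 / ((N : ℝ) - 4)) z w := by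
  have hα : 0 < 8 / ((N : ℝ) - 4) := by
    have : (4 : ℝ) < N := by exact_mod_cast hN
    exact div_pos (by norm_num) (by linarith)
  rcases eq_or_ne z 0 with rfl | hz
  · simp [fNL', normRpowSMulDeriv, Real.zero_rpow hα.ne']
  · rw [fNL', if_neg hz, normRpowSMulDeriv_apply, Complex.re_conj_mul_eq_inner, ← Complex.real_smul,
      ← Complex.real_smul]

theorem stmt_3 (N : ℕ) (hN : 13 ≤ N) :
    ∃ C : ℝ, 0 < C ∧ ∀ z1 z2 : ℂ,
      |FNL N (z1 + z2) - FNL N z1 - ((starRingEnd ℂ) (fNL N z1) * z2).re|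
        ≤ C * (‖z1‖ ^ ((8 : ℝ) / ((N : ℝ) - 4)) * ‖z2‖ ^ 2
            + ‖z2‖ ^ ((2 * (N : ℝ)) / ((N : ℝ) - 4))) ∧
      |FNL N (z1 + z2) - FNL N z1 - ((starRingEnd ℂ) (fNL N z1) * z2).re
          - (1 / 2) * ((starRingEnd ℂ) (fNL' N z1 z2) * z2).re|
        ≤ C * ‖z2‖ ^ ((2 * (N : ℝ)) / ((N : ℝ) - 4)) := by
  have hN' : (13 : ℝ) ≤ N := by exact_mod_cast hN
  have hN4 : 4 < N := by omega
  have h0 : 0 < 8 / ((N : ℝ) - 4) := div_pos (by norm_num) (by linarith)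
  have h1 : 8 / ((N : ℝ) - 4) ≤ 1 := (div_le_one (by linarith)).2 (by linarith)
  have hexp : 2 * (N : ℝ) / (N - 4) = 8 / (N - 4) + 2 := by
    field_simp [show (N : ℝ) - 4 ≠ 0 by linarith]
    ring
  refine ⟨6, by norm_num, fun z1 z2 => ?_⟩
  simp only [FNL_eq_norm_rpow_div hN4, fNL_eq_normRpowSMul, fNL'_eq_normRpowSMulDeriv hN4,
    Complex.re_conj_mul_eq_inner, hexp]
  exact ⟨abs_norm_rpow_taylor_one_le h0 h1 z1 z2, abs_norm_rpow_taylor_two_le h0 h1 z1 z2⟩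
end
end

section
/- There exists a constant C > 0 such that for all ζ, θ ∈ ℝ, all μ ∈ [1/2, 2] and all λ ∈ (0, 1], one has |Re ∫_{ℝ^N} conj(e^{iζ}·ΛW_μ(x))·( f(e^{iζ}W_μ(x) + e^{iθ}W_λ(x)) − f(e^{iζ}W_μ(x)) − f(e^{iθ}W_λ(x)) ) dx| ≤ C·λ^{(N−4)/2}. -/
open MeasureTheory

noncomputable section

/-! The interaction term is controlled pointwise. For `q = 8/(N-4) ≤ 1` the map `z ↦ |z|^q z`
satisfies `|f(a+b) - f(a) - f(b)| ≤ 2 |a|^q |b|`, and `|ΛW_μ| ≤ ((N-4)/2) W_μ`. Writing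
`W_μ(x) = C_N μ^α (μ² + |x|²)^(-α)` with `α = (N-4)/2`, one has `W_μ ≲ (1+|x|²)^(-α)` uniformly for
`μ ∈ [1/2, 2]` and `W_λ ≤ C_N λ^α |x|^(-2α)`. Since `α q = 4`, the integrand is bounded by
`λ^α (1+|x|²)^(-(N+4)/2) |x|^(-(N-4))`, which is integrable on `ℝ^N`. -/

namespace Real

lemma abs_rpow_sub_rpow_le_abs_sub_rpow {x y q : ℝ} (hx : 0 ≤ x) (hy : 0 ≤ y) (hq0 : 0 ≤ q)
    (hq1 : q ≤ 1) : |x ^ q - y ^ q| ≤ |x - y| ^ q := by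
  wlog hyx : y ≤ x generalizing x y
  · rw [abs_sub_comm, abs_sub_comm x]
    exact this hy hx (le_of_not_ge hyx)
  have hsub : x ^ q ≤ (x - y) ^ q + y ^ q := by
    simpa using rpow_add_le_add_rpow (sub_nonneg.2 hyx) hy hq0 hq1
  rw [abs_of_nonneg (sub_nonneg.2 (rpow_le_rpow hy hyx hq0)), abs_of_nonneg (sub_nonneg.2 hyx)]
  linarith

lemma abs_rpow_sub_one_le_abs_sub_one {t q : ℝ} (ht : 0 ≤ t) (hq0 : 0 ≤ q) (hq1 : q ≤ 1) :
    |t ^ q - 1| ≤ |t - 1| := by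
  rcases le_total t 1 with h | h
  · have h1 : t ≤ t ^ q := self_le_rpow_of_le_one ht h hq1
    have h2 : t ^ q ≤ 1 := rpow_le_one ht h hq0
    rw [abs_of_nonpos (by linarith), abs_of_nonpos (by linarith)]
    linarith
  · have h1 : t ^ q ≤ t := rpow_le_self_of_one_le h hq1
    have h2 : 1 ≤ t ^ q := one_le_rpow h hq0
    rw [abs_of_nonneg (by linarith), abs_of_nonneg (by linarith)]
    linarith

lemma abs_rpow_sub_rpow_mul_le {s a q : ℝ} (hs : 0 ≤ s) (ha : 0 ≤ a) (hq0 : 0 ≤ q)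
    (hq1 : q ≤ 1) : |s ^ q - a ^ q| * a ≤ a ^ q * |s - a| := by
  rcases ha.eq_or_lt with rfl | ha
  · rw [mul_zero]; positivity
  have hs' : s = a * (s / a) := by field_simp
  have key := abs_rpow_sub_one_le_abs_sub_one (div_nonneg hs ha.le) hq0 hq1
  calc |s ^ q - a ^ q| * a = a ^ q * (|(s / a) ^ q - 1| * a) := by
        rw [hs', mul_rpow ha.le (div_nonneg hs ha.le), ← hs', ← mul_sub_one, abs_mul,
          abs_of_pos (rpow_pos_of_pos ha q)]
        ring
    _ ≤ a ^ q * (|s / a - 1| * a) := by gcongr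
    _ = a ^ q * |s - a| := by
        rw [← abs_of_pos ha, ← abs_mul, abs_of_pos ha, sub_one_mul, div_mul_cancel₀ _ ha.ne']

end Real

section PowerNonlinearity

variable {E : Type*} [NormedAddCommGroup E] [NormedSpace ℝ E]

theorem norm_rpow_smul_add_sub_le {q : ℝ} (hq0 : 0 ≤ q) (hq1 : q ≤ 1) (a b : E) :
    ‖‖a + b‖ ^ q • (a + b) - ‖a‖ ^ q • a - ‖b‖ ^ q • b‖ ≤ 2 * (‖a‖ ^ q * ‖b‖) := by
  have hsplit : ‖a + b‖ ^ q • (a + b) - ‖a‖ ^ q • a - ‖b‖ ^ q • b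
      = (‖a + b‖ ^ q - ‖a‖ ^ q) • a + (‖a + b‖ ^ q - ‖b‖ ^ q) • b := by
    simp only [smul_add, sub_smul]; abel
  have ha : |‖a + b‖ ^ q - ‖a‖ ^ q| * ‖a‖ ≤ ‖a‖ ^ q * ‖b‖ :=
    (Real.abs_rpow_sub_rpow_mul_le (norm_nonneg _) (norm_nonneg _) hq0 hq1).trans <| by
      gcongr; simpa using abs_norm_sub_norm_le (a + b) a
  have hb : |‖a + b‖ ^ q - ‖b‖ ^ q| ≤ ‖a‖ ^ q :=
    (Real.abs_rpow_sub_rpow_le_abs_sub_rpow (norm_nonneg _) (norm_nonneg _) hq0 hq1).trans <| by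
      gcongr; simpa using abs_norm_sub_norm_le (a + b) b
  rw [hsplit]
  refine (norm_add_le _ _).trans ?_
  rw [norm_smul, norm_smul, Real.norm_eq_abs, Real.norm_eq_abs]
  nlinarith [norm_nonneg b, abs_nonneg (‖a + b‖ ^ q - ‖b‖ ^ q)]

end PowerNonlinearity

lemma fNL_eq_smul (N : ℕ) (z : ℂ) : fNL N z = ‖z‖ ^ ((8 : ℝ) / ((N : ℝ) - 4)) • z :=
  (Complex.real_smul).symm

lemma norm_fNL_add_sub_le {N : ℕ} (hN : 12 ≤ N) (a b : ℂ) :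
    ‖fNL N (a + b) - fNL N a - fNL N b‖ ≤ 2 * (‖a‖ ^ ((8 : ℝ) / ((N : ℝ) - 4)) * ‖b‖) := by
  have hN' : (12 : ℝ) ≤ N := by exact_mod_cast hN
  simp only [fNL_eq_smul]
  exact norm_rpow_smul_add_sub_le (div_nonneg (by norm_num) (by linarith))
    ((div_le_one (by linarith)).2 (by linarith)) a b

open Set Metric

section Bubble

variable {E : Type*} [NormedAddCommGroup E]

def bubble (c α μ : ℝ) (x : E) : ℝ := c * μ ^ α * (μ ^ 2 + ‖x‖ ^ 2) ^ (-α)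

variable {c α μ : ℝ}

lemma bubble_nonneg (hc : 0 ≤ c) (hμ : 0 ≤ μ) (x : E) : 0 ≤ bubble c α μ x := by
  unfold bubble; positivity

lemma bubble_le_of_mem_Icc (hc : 0 ≤ c) (hα : 0 ≤ α) (hμ : μ ∈ Icc (1 / 2 : ℝ) 2) (x : E) :
    bubble c α μ x ≤ c * 8 ^ α * (1 + ‖x‖ ^ 2) ^ (-α) := by
  obtain ⟨hμ1, hμ2⟩ := hμ
  have hpow : μ ^ α ≤ 2 ^ α := Real.rpow_le_rpow (by linarith) hμ2 hα
  have hbase : (μ ^ 2 + ‖x‖ ^ 2) ^ (-α) ≤ ((1 + ‖x‖ ^ 2) / 4) ^ (-α) :=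
    Real.rpow_le_rpow_of_nonpos (by positivity) (by nlinarith [sq_nonneg ‖x‖]) (by linarith)
  have h8 : (8 : ℝ) ^ α = 2 ^ α * 4 ^ α := by
    rw [← Real.mul_rpow (by norm_num) (by norm_num)]; norm_num
  have h4 : ((1 + ‖x‖ ^ 2) / 4) ^ (-α) = 4 ^ α * (1 + ‖x‖ ^ 2) ^ (-α) := by
    rw [Real.div_rpow (by positivity) (by norm_num), Real.rpow_neg (by norm_num : (0 : ℝ) ≤ 4),
      div_inv_eq_mul, mul_comm]
  calc bubble c α μ x ≤ c * 2 ^ α * ((1 + ‖x‖ ^ 2) / 4) ^ (-α) := by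
        unfold bubble; gcongr
    _ = c * 8 ^ α * (1 + ‖x‖ ^ 2) ^ (-α) := by rw [h4, h8]; ring

lemma bubble_le_norm_rpow (hc : 0 ≤ c) (hα : 0 ≤ α) (hμ : 0 ≤ μ) {x : E} (hx : x ≠ 0) :
    bubble c α μ x ≤ c * μ ^ α * ‖x‖ ^ (-(2 * α)) := by
  have hx' : 0 < ‖x‖ ^ 2 := by positivity
  have hsq : (‖x‖ ^ 2) ^ (-α) = ‖x‖ ^ (-(2 * α)) := by
    rw [← Real.rpow_natCast, ← Real.rpow_mul (norm_nonneg x)]; norm_num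
  unfold bubble
  rw [← hsq]
  exact mul_le_mul_of_nonneg_left
    (Real.rpow_le_rpow_of_nonpos hx' (by nlinarith) (by linarith)) (by positivity)

lemma bubble_eq_mul (hμ : μ ≠ 0) (x : E) :
    bubble c α μ x = c * μ ^ α * (μ ^ 2 + ‖x‖ ^ 2) ^ (-α - 1) * (μ ^ 2 + ‖x‖ ^ 2) := by
  have hpos : 0 < μ ^ 2 + ‖x‖ ^ 2 := by positivity
  rw [bubble, mul_assoc _ (_ ^ (-α - 1)), ← Real.rpow_add_one hpos.ne']
  ring_nf

end Bubble

section BubbleDeriv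

variable {E : Type*} [NormedAddCommGroup E] [InnerProductSpace ℝ E] {c α μ : ℝ}

lemma hasFDerivAt_bubble (hμ : μ ≠ 0) (x : E) :
    HasFDerivAt (bubble c α μ)
      ((c * μ ^ α * (-α * (μ ^ 2 + ‖x‖ ^ 2) ^ (-α - 1))) • (2 • innerSL ℝ x)) x := by
  have hpos : μ ^ 2 + ‖x‖ ^ 2 ≠ 0 := by positivity
  have h := (((hasStrictFDerivAt_norm_sq x).hasFDerivAt.const_add (μ ^ 2)).rpow_const
    (p := -α) (Or.inl hpos)).const_mul (c * μ ^ α)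
  show HasFDerivAt (fun y => c * μ ^ α * (μ ^ 2 + ‖y‖ ^ 2) ^ (-α)) _ x
  simpa [smul_smul, mul_assoc] using h

lemma bubble_euler (hμ : μ ≠ 0) (x : E) :
    α * bubble c α μ x + fderiv ℝ (bubble c α μ) x x
      = α * c * μ ^ α * (μ ^ 2 + ‖x‖ ^ 2) ^ (-α - 1) * (μ ^ 2 - ‖x‖ ^ 2) := by
  rw [(hasFDerivAt_bubble hμ x).fderiv, bubble_eq_mul hμ]
  simp only [FunLike.coe_smul, Pi.smul_apply, smul_eq_mul, innerSL_apply_apply,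
    real_inner_self_eq_norm_sq]
  ring

lemma abs_bubble_euler_le (hc : 0 ≤ c) (hα : 0 ≤ α) (hμ : 0 < μ) (x : E) :
    |α * bubble c α μ x + fderiv ℝ (bubble c α μ) x x| ≤ α * bubble c α μ x := by
  have hfac : 0 ≤ α * c * μ ^ α * (μ ^ 2 + ‖x‖ ^ 2) ^ (-α - 1) := by positivity
  rw [bubble_euler hμ.ne', abs_mul, abs_of_nonneg hfac, bubble_eq_mul hμ.ne']
  calc _ ≤ α * c * μ ^ α * (μ ^ 2 + ‖x‖ ^ 2) ^ (-α - 1) * (μ ^ 2 + ‖x‖ ^ 2) := by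
        gcongr
        exact abs_le.2 ⟨by nlinarith [sq_nonneg ‖x‖], by nlinarith [sq_nonneg ‖x‖]⟩
    _ = _ := by ring

end BubbleDeriv

def bubbleConst (N : ℕ) : ℝ := (N * ((N : ℝ) - 4) * ((N : ℝ) ^ 2 - 4)) ^ (((N : ℝ) - 4) / 8)

lemma bubbleConst_nonneg {N : ℕ} (hN : 4 ≤ N) : 0 ≤ bubbleConst N := by
  have hN' : (4 : ℝ) ≤ N := by exact_mod_cast hN
  have : 0 ≤ (N : ℝ) ^ 2 - 4 := by nlinarith
  unfold bubbleConst
  exact Real.rpow_nonneg (mul_nonneg (mul_nonneg (by positivity) (by linarith)) this) _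

lemma rescR_Wfun {N : ℕ} {μ : ℝ} (hμ : 0 < μ) :
    rescR μ (Wfun N) = bubble (bubbleConst N) (((N : ℝ) - 4) / 2) μ := by
  ext x
  set α : ℝ := ((N : ℝ) - 4) / 2
  have hscale : 1 + ‖μ⁻¹ • x‖ ^ 2 = (μ ^ 2 + ‖x‖ ^ 2) / μ ^ 2 := by
    rw [norm_smul, Real.norm_of_nonneg (inv_nonneg.2 hμ.le)]
    field_simp
  have hμα : (μ ^ 2) ^ (-α) = μ ^ (-α) * μ ^ (-α) := by
    rw [← Real.rpow_natCast, ← Real.rpow_mul hμ.le, ← Real.rpow_add hμ]; ring_nf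
  rw [rescR, Wfun, bubble, bubbleConst, hscale, Real.div_rpow (by positivity) (by positivity),
    hμα, Real.rpow_neg hμ.le]
  field_simp
  ring

lemma norm_cexp (θ : ℝ) : ‖cexp θ‖ = 1 := by
  rw [cexp, mul_comm]; exact Complex.norm_exp_ofReal_mul_I θ

lemma norm_conj_mul_fNL_sub_le {N : ℕ} (hN : 12 ≤ N) (ζ θ L : ℝ) {A B : ℝ} (hA : 0 ≤ A)
    (hB : 0 ≤ B) :
    ‖(starRingEnd ℂ) (cexp ζ * (L : ℂ)) *
        (fNL N (cexp ζ * (A : ℂ) + cexp θ * (B : ℂ)) - fNL N (cexp ζ * (A : ℂ))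
          - fNL N (cexp θ * (B : ℂ)))‖
      ≤ 2 * |L| * (A ^ ((8 : ℝ) / ((N : ℝ) - 4)) * B) := by
  have hnorm : ∀ (φ t : ℝ), 0 ≤ t → ‖cexp φ * (t : ℂ)‖ = t := fun φ t ht => by
    rw [norm_mul, norm_cexp, one_mul, Complex.norm_real, Real.norm_of_nonneg ht]
  have hD := norm_fNL_add_sub_le hN (cexp ζ * (A : ℂ)) (cexp θ * (B : ℂ))
  rw [hnorm _ _ hA, hnorm _ _ hB] at hD
  rw [norm_mul, RCLike.norm_conj, norm_mul, norm_cexp, one_mul, Complex.norm_real,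
    Real.norm_eq_abs]
  linarith [mul_le_mul_of_nonneg_left hD (abs_nonneg L)]

section Integrability

variable {E : Type*} [NormedAddCommGroup E] [NormedSpace ℝ E] [FiniteDimensional ℝ E]
  [MeasurableSpace E] [BorelSpace E] {μ : Measure E} [μ.IsAddHaarMeasure]

lemma integrable_one_add_norm_sq_rpow_mul_norm_rpow {r s : ℝ} (hs0 : 0 ≤ s)
    (hs : s < Module.finrank ℝ E) (hr : Module.finrank ℝ E < r) :
    Integrable (fun x : E => (1 + ‖x‖ ^ 2) ^ (-r / 2) * ‖x‖ ^ (-s)) μ := by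
  have hr0 : 0 ≤ r := by linarith
  have hmeas : AEStronglyMeasurable (fun x : E => (1 + ‖x‖ ^ 2) ^ (-r / 2) * ‖x‖ ^ (-s)) μ :=
    (by fun_prop : Measurable _).aestronglyMeasurable
  have hball :
      IntegrableOn (fun x : E => (1 + ‖x‖ ^ 2) ^ (-r / 2) * ‖x‖ ^ (-s)) (ball 0 1) μ := by
    refine integrableOn_ball_of_norm_le_rpow (C := 1) (Nat.cast_pos.mp (hs0.trans_lt hs))
      hs (ae_of_all _ fun x => ?_) hmeas
    rw [Real.norm_of_nonneg (by positivity), one_mul]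
    exact mul_le_of_le_one_left (by positivity)
      (Real.rpow_le_one_of_one_le_of_nonpos (by nlinarith [sq_nonneg ‖x‖]) (by linarith))
  have hcompl :
      IntegrableOn (fun x : E => (1 + ‖x‖ ^ 2) ^ (-r / 2) * ‖x‖ ^ (-s)) (ball 0 1)ᶜ μ := by
    refine (integrable_rpow_neg_one_add_norm_sq hr).integrableOn.mono' hmeas.restrict ?_
    refine (ae_restrict_iff' measurableSet_ball.compl).2 (ae_of_all _ fun x hx => ?_)
    have hx1 : 1 ≤ ‖x‖ := by simpa using hx
    rw [Real.norm_of_nonneg (by positivity)]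
    exact mul_le_of_le_one_right (by positivity)
      (Real.rpow_le_one_of_one_le_of_nonpos hx1 (by linarith))
  simpa using hball.union hcompl

end Integrability

theorem exists_norm_interaction_le {N : ℕ} (hN : 12 ≤ N) :
    ∃ K : ℝ, 0 ≤ K ∧ ∀ (ζ θ μ lam : ℝ) (x : Rn N), μ ∈ Icc (1 / 2 : ℝ) 2 → 0 < lam → x ≠ 0 →
      ‖(starRingEnd ℂ) (cexp ζ * (LamR (rescR μ (Wfun N)) x : ℂ)) *
          (fNL N (cexp ζ * (rescR μ (Wfun N) x : ℂ) + cexp θ * (rescR lam (Wfun N) x : ℂ))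
            - fNL N (cexp ζ * (rescR μ (Wfun N) x : ℂ))
            - fNL N (cexp θ * (rescR lam (Wfun N) x : ℂ)))‖
        ≤ K * lam ^ (((N : ℝ) - 4) / 2) *
          ((1 + ‖x‖ ^ 2) ^ (-((N : ℝ) + 4) / 2) * ‖x‖ ^ (-((N : ℝ) - 4))) := by
  have hN' : (12 : ℝ) ≤ N := by exact_mod_cast hN
  set α : ℝ := ((N : ℝ) - 4) / 2 with hα_def
  set q : ℝ := 8 / ((N : ℝ) - 4) with hq_def
  set c := bubbleConst N
  set K₁ := c * 8 ^ α
  have hα : 0 ≤ α := by linarith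
  have hq : 0 ≤ q := div_nonneg (by norm_num) (by linarith)
  have hαq : α * q = 4 := by
    have : (N : ℝ) - 4 ≠ 0 := by linarith
    rw [hα_def, hq_def]; field_simp; ring
  have hc : 0 ≤ c := bubbleConst_nonneg (by omega)
  have hK₁ : 0 ≤ K₁ := by positivity
  refine ⟨2 * α * (K₁ * K₁ ^ q) * c, by positivity, fun ζ θ μ lam x hμ hlam hx => ?_⟩
  have hμ0 : 0 < μ := by linarith [hμ.1]
  set R := 1 + ‖x‖ ^ 2
  have hR : 0 < R := by positivity
  rw [rescR_Wfun hμ0, rescR_Wfun hlam]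
  set A := bubble c α μ x
  set B := bubble c α lam x
  have hA0 : 0 ≤ A := bubble_nonneg hc hμ0.le x
  have hA : A ≤ K₁ * R ^ (-α) := bubble_le_of_mem_Icc hc hα hμ x
  have hAq : A ^ q ≤ K₁ ^ q * R ^ (-4 : ℝ) := by
    calc A ^ q ≤ (K₁ * R ^ (-α)) ^ q := Real.rpow_le_rpow hA0 hA hq
      _ = K₁ ^ q * R ^ (-4 : ℝ) := by
        rw [Real.mul_rpow hK₁ (by positivity), ← Real.rpow_mul hR.le, neg_mul, hαq]
  have hB0 : 0 ≤ B := bubble_nonneg hc hlam.le x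
  have hB : B ≤ c * lam ^ α * ‖x‖ ^ (-((N : ℝ) - 4)) := by
    have h := bubble_le_norm_rpow hc hα hlam.le hx
    rwa [show 2 * α = (N : ℝ) - 4 by rw [hα_def]; ring] at h
  have hL : |LamR (bubble c α μ) x| ≤ α * A := abs_bubble_euler_le hc hα hμ0 x
  have hRpow : R ^ (-α) * R ^ (-4 : ℝ) = R ^ (-((N : ℝ) + 4) / 2) := by
    rw [← Real.rpow_add hR]; congr 1; ring
  calc _ ≤ 2 * |LamR (bubble c α μ) x| * (A ^ q * B) :=
        norm_conj_mul_fNL_sub_le hN ζ θ _ hA0 hB0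
    _ ≤ 2 * (α * (K₁ * R ^ (-α))) * ((K₁ ^ q * R ^ (-4 : ℝ)) *
          (c * lam ^ α * ‖x‖ ^ (-((N : ℝ) - 4)))) := by
        gcongr
        exact hL.trans (mul_le_mul_of_nonneg_left hA hα)
    _ = _ := by rw [← hRpow]; ring

theorem stmt_8 (N : ℕ) (hN : 13 ≤ N) :
    ∃ C : ℝ, 0 < C ∧
      ∀ ζ θ μ lam : ℝ, 1 / 2 ≤ μ → μ ≤ 2 → 0 < lam → lam ≤ 1 →
        |(∫ x : Rn N,
            (starRingEnd ℂ) (cexp ζ * (LamR (rescR μ (Wfun N)) x : ℂ)) *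
              (fNL N (cexp ζ * (rescR μ (Wfun N) x : ℂ) + cexp θ * (rescR lam (Wfun N) x : ℂ))
                - fNL N (cexp ζ * (rescR μ (Wfun N) x : ℂ))
                - fNL N (cexp θ * (rescR lam (Wfun N) x : ℂ)))).re|
          ≤ C * lam ^ (((N : ℝ) - 4) / 2) := by
  obtain ⟨K, hK, hpt⟩ := exists_norm_interaction_le (N := N) (by omega)
  set Φ : Rn N → ℝ := fun x => (1 + ‖x‖ ^ 2) ^ (-((N : ℝ) + 4) / 2) * ‖x‖ ^ (-((N : ℝ) - 4))
  have hN' : (13 : ℝ) ≤ N := by exact_mod_cast hN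
  have hdim : (Module.finrank ℝ (Rn N) : ℝ) = N := by simp
  have hΦ : Integrable Φ := integrable_one_add_norm_sq_rpow_mul_norm_rpow (by linarith)
    (by rw [hdim]; linarith) (by rw [hdim]; linarith)
  have hΦ0 : 0 ≤ ∫ x, Φ x := integral_nonneg fun x => by positivity
  have : Nontrivial (Rn N) := by
    have : Nontrivial (Fin N) := Fin.nontrivial_iff_two_le.mpr (by omega)
    infer_instance
  refine ⟨K * (∫ x, Φ x) + 1, by nlinarith [mul_nonneg hK hΦ0],
    fun ζ θ μ lam hμ1 hμ2 hlam _ => ?_⟩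
  have hlamα : 0 ≤ lam ^ (((N : ℝ) - 4) / 2) := by positivity
  calc _ ≤ ‖_‖ := Complex.abs_re_le_norm _
    _ ≤ ∫ x, K * lam ^ (((N : ℝ) - 4) / 2) * Φ x :=
        norm_integral_le_of_norm_le (hΦ.const_mul _) <| by
          filter_upwards [Measure.ae_ne volume 0] with x hx
          exact hpt ζ θ μ lam x ⟨hμ1, hμ2⟩ hlam hx
    _ = K * (∫ x, Φ x) * lam ^ (((N : ℝ) - 4) / 2) := by rw [integral_const_mul]; ring
    _ ≤ (K * (∫ x, Φ x) + 1) * lam ^ (((N : ℝ) - 4) / 2) :=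
        mul_le_mul_of_nonneg_right (by linarith) hlamα
end
end
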